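/- Let n = n₁ · n₂ ⋯ n_r be a good factorization of the positive integer n. If n is a leader, then every factor n_j is a leader. -/

import Mathlib

open Real

/-- `Writes n k` means the positive integer `n` can be written using exactly `k` ones
combined by additions and multiplications. -/
inductive Writes : ℕ → ℕ → Prop
  | one : Writes 1 1
  | add {a b m n : ℕ} : Writes a m → Writes b n → Writes (a + b) (m + n)
  | mul {a b m n : ℕ} : Writes a m → Writes b n → Writes (a * b) (m + n)

/-- The integer complexity `‖n‖`: the least number of 1's needed to write `n`
using additions and multiplications. -/
noncomputable def cpx (n : ℕ) : ℕ := sInf {k | Writes n k}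

/-- The defect `δ(n) = ‖n‖ - 3 log₃ n`. -/
noncomputable def defect (n : ℕ) : ℝ := (cpx n : ℝ) - 3 * Real.logb 3 n

/-- A positive integer n is a leader if either 3 ∤ n, or 3 ∣ n and ‖n‖ < 3 + ‖n/3‖. -/
def Leader (n : ℕ) : Prop :=
  0 < n ∧ (¬ (3 ∣ n) ∨ (3 ∣ n ∧ cpx n < 3 + cpx (n / 3)))

/-! If a factor `3 * m` of a good factorization of `n` were not a leader, then
`‖3 * m‖ ≥ 3 + ‖m‖`, and replacing that factor by `m` would write `n / 3` with at most
`‖n‖ - 3` ones, so `n` would not be a leader either. -/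

theorem Writes.pos {n k : ℕ} (h : Writes n k) : 0 < n := by
  induction h with
  | one => exact Nat.one_pos
  | add _ _ ha _ => exact Nat.add_pos_left ha _
  | mul _ _ ha hb => exact Nat.mul_pos ha hb

theorem Writes.exists_of_pos {n : ℕ} (hn : 0 < n) : ∃ k, Writes n k := by
  induction n with
  | zero => omega
  | succ m ih =>
    rcases Nat.eq_zero_or_pos m with rfl | hm
    · exact ⟨1, Writes.one⟩
    · obtain ⟨k, hk⟩ := ih hm
      exact ⟨k + 1, hk.add Writes.one⟩

theorem writes_cpx {n : ℕ} (hn : 0 < n) : Writes n (cpx n) :=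
  Nat.sInf_mem (Writes.exists_of_pos hn)

theorem cpx_le_of_writes {n k : ℕ} (h : Writes n k) : cpx n ≤ k :=
  Nat.sInf_le h

theorem cpx_zero : cpx 0 = 0 :=
  Nat.sInf_eq_zero.2 <| .inr <| Set.eq_empty_of_forall_notMem fun _ h => (Writes.pos h).ne rfl

theorem cpx_mul_le (a b : ℕ) : cpx (a * b) ≤ cpx a + cpx b := by
  rcases Nat.eq_zero_or_pos a with rfl | ha
  · simp [cpx_zero]
  rcases Nat.eq_zero_or_pos b with rfl | hb
  · simp [cpx_zero]
  exact cpx_le_of_writes ((writes_cpx ha).mul (writes_cpx hb))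

theorem cpx_mul_prod_le {ι : Type*} (s : Finset ι) (g : ι → ℕ) (a : ℕ) :
    cpx (a * ∏ i ∈ s, g i) ≤ cpx a + ∑ i ∈ s, cpx (g i) := by
  classical
  induction s using Finset.induction_on generalizing a with
  | empty => simp
  | insert i s hi ih =>
    rw [Finset.prod_insert hi, Finset.sum_insert hi, mul_left_comm]
    calc cpx (g i * (a * ∏ x ∈ s, g x))
        ≤ cpx (g i) + cpx (a * ∏ x ∈ s, g x) := cpx_mul_le _ _
      _ ≤ cpx (g i) + (cpx a + ∑ x ∈ s, cpx (g x)) := Nat.add_le_add_left (ih a) _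
      _ = cpx a + (cpx (g i) + ∑ x ∈ s, cpx (g x)) := by ring

theorem leader_iff {n : ℕ} (hn : 0 < n) : Leader n ↔ (3 ∣ n → cpx n < 3 + cpx (n / 3)) := by
  unfold Leader
  tauto

theorem leader_factors_of_good_factorization_general (r : ℕ) (f : Fin r → ℕ)
    (n : ℕ) (hn : n = ∏ i, f i)
    (hgood : cpx n = ∑ i, cpx (f i)) (hL : Leader n) :
    ∀ j, Leader (f j) := by
  intro j
  set P := ∏ i ∈ Finset.univ.erase j, f i
  have hn_split : n = f j * P := by rw [hn, Finset.mul_prod_erase _ _ (Finset.mem_univ j)]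
  have hgood_split : cpx n = cpx (f j) + ∑ i ∈ Finset.univ.erase j, cpx (f i) := by
    rw [hgood, Finset.add_sum_erase _ (fun i => cpx (f i)) (Finset.mem_univ j)]
  have hfj : 0 < f j := Nat.pos_of_dvd_of_pos ⟨P, hn_split⟩ hL.1
  rw [leader_iff hfj]
  rintro ⟨m, hm⟩
  have hn3 : n = 3 * (m * P) := by rw [hn_split, hm, mul_assoc]
  have hL3 := (leader_iff hL.1).1 hL ⟨m * P, hn3⟩
  rw [hn3, Nat.mul_div_cancel_left _ three_pos, ← hn3] at hL3
  have hP : cpx (m * P) ≤ cpx m + ∑ i ∈ Finset.univ.erase j, cpx (f i) :=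
    cpx_mul_prod_le _ _ _
  rw [hm, Nat.mul_div_cancel_left _ three_pos, ← hm]
  omega

/-- In a good factorization of a leader, every factor is a leader. -/
theorem leader_factors_of_good_factorization (r : ℕ) (f : Fin r → ℕ)
    (hf : ∀ i, 0 < f i) (n : ℕ) (hn : n = ∏ i, f i)
    (hgood : cpx n = ∑ i, cpx (f i)) (hL : Leader n) :
    ∀ j, Leader (f j) :=
  leader_factors_of_good_factorization_general r f n hn hgood hL
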